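/- For the two-dimensional example Φ(X) = |0⟩⟨0| X |1⟩⟨0|, one has ‖Φ‖_{q→p} = 1 for all p, q ∈ [1, ∞], while ‖Φ‖^H_{q→p} = 2^{−1/q} < 1 for all q < ∞. Hence a strict gap ‖Φ‖^H_{q→p} < ‖Φ‖_{q→p} is possible for general super-operators. -/

import Mathlib

/-!
`Φ X` is the matrix whose only nonzero entry is `X 0 1`, in position `(0, 0)`, so
`‖Φ X‖_p = |X₀₁|` for every `p`. An entry of `X` is bounded by the largest singular value of `X`,
hence by `‖X‖_q`, with equality for `X = |0⟩⟨1|`. For Hermitian `X` with eigenvalues `λ₀, λ₁`,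
the identity `(λ₀ - λ₁)² = (X₀₀ - X₁₁)² + 4|X₀₁|²` gives `|X₀₁| ≤ (|λ₀| + |λ₁|) / 2`, and the
power-mean inequality bounds this by `2^{-1/q} ‖X‖_q`, with equality for the Pauli matrix `σₓ`.
-/

open scoped ENNReal
open Matrix
open scoped ComplexOrder

noncomputable section

namespace SchattenNotes

/-- The vector of singular values of a matrix. -/
def singVal {m n : Type*} [Fintype m] [Fintype n] [DecidableEq n]
    (X : Matrix m n ℂ) (i : n) : ℝ :=
  Real.sqrt (((Matrix.posSemidef_conjTranspose_mul_self X).1).eigenvalues i)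

/-- The Schatten `p`-norm, for `p ∈ [1, ∞]` encoded as `p : ℝ≥0∞`. -/
def schatten {m n : Type*} [Fintype m] [Fintype n] [DecidableEq n]
    (p : ℝ≥0∞) (X : Matrix m n ℂ) : ℝ :=
  if p = ∞ then ⨆ i, singVal X i
  else (∑ i, singVal X i ^ p.toReal) ^ (1 / p.toReal)

/-- The induced `q → p` super-operator norm. -/
def opNorm {m n : Type*} [Fintype m] [Fintype n] [DecidableEq m] [DecidableEq n]
    (q p : ℝ≥0∞) (Φ : Matrix n n ℂ →ₗ[ℂ] Matrix m m ℂ) : ℝ :=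
  ⨆ X : {X : Matrix n n ℂ // X ≠ 0}, schatten p (Φ X.1) / schatten q X.1

/-- The induced `q → p` super-operator norm restricted to Hermitian inputs. -/
def opNormH {m n : Type*} [Fintype m] [Fintype n] [DecidableEq m] [DecidableEq n]
    (q p : ℝ≥0∞) (Φ : Matrix n n ℂ →ₗ[ℂ] Matrix m m ℂ) : ℝ :=
  ⨆ X : {X : Matrix n n ℂ // X.IsHermitian ∧ X ≠ 0}, schatten p (Φ X.1) / schatten q X.1

/-- The super-operator `Φ ⊗ I_{L(H)}`, where `H` has orthonormal basis indexed by `k`. -/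
def tensorId {m n : Type*} [Fintype m] [Fintype n] (k : Type*) [Fintype k]
    (Φ : Matrix n n ℂ →ₗ[ℂ] Matrix m m ℂ) :
    Matrix (n × k) (n × k) ℂ →ₗ[ℂ] Matrix (m × k) (m × k) ℂ where
  toFun X := fun r s => Φ (fun i j => X (i, r.2) (j, s.2)) r.1 s.1
  map_add' X Y := by
    funext r s
    show Φ ((fun i j => X (i, r.2) (j, s.2)) + fun i j => Y (i, r.2) (j, s.2)) r.1 s.1 = _
    exact congrFun (congrFun (map_add Φ (fun i j => X (i, r.2) (j, s.2) : Matrix n n ℂ)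
      (fun i j => Y (i, r.2) (j, s.2) : Matrix n n ℂ)) r.1) s.1
  map_smul' c X := by
    funext r s
    show Φ (c • fun i j => X (i, r.2) (j, s.2)) r.1 s.1 = _
    exact congrFun (congrFun (_root_.map_smul Φ c
      (fun i j => X (i, r.2) (j, s.2) : Matrix n n ℂ)) r.1) s.1

/-- Complete positivity of a super-operator. -/
def IsCP {m n : Type*} [Fintype m] [Fintype n]
    (Φ : Matrix n n ℂ →ₗ[ℂ] Matrix m m ℂ) : Prop :=
  ∀ (k : ℕ) (X : Matrix (n × Fin k) (n × Fin k) ℂ),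
    X.PosSemidef → (tensorId (Fin k) Φ X).PosSemidef

/-- Trace preservation of a super-operator. -/
def IsTP {m n : Type*} [Fintype m] [Fintype n]
    (Φ : Matrix n n ℂ →ₗ[ℂ] Matrix m m ℂ) : Prop :=
  ∀ X : Matrix n n ℂ, (Φ X).trace = X.trace

/-- The rank-one operator `|u⟩⟨v|`. -/
def outer {m n : Type*} (u : m → ℂ) (v : n → ℂ) : Matrix m n ℂ :=
  Matrix.vecMulVec u (star v)

/-- The quadratic form `⟨a|X|a⟩`. -/
def sand {n : Type*} [Fintype n] (a : n → ℂ) (X : Matrix n n ℂ) : ℂ :=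
  star a ⬝ᵥ X *ᵥ a

/-- A unit vector. -/
def IsUnit' {n : Type*} [Fintype n] (u : n → ℂ) : Prop := star u ⬝ᵥ u = 1


def ket0 : Fin 2 → ℂ := ![1, 0]
def ket1 : Fin 2 → ℂ := ![0, 1]

end SchattenNotes

theorem eq_and_eq_or_eq_and_eq_of_add_eq_of_mul_eq {R : Type*} [CommRing R] [IsDomain R]
    {x y a b : R} (hadd : x + y = a + b) (hmul : x * y = a * b) :
    (x = a ∧ y = b) ∨ (x = b ∧ y = a) := by
  have h : (x - a) * (x - b) = 0 := by linear_combination x * hadd - hmul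
  rcases mul_eq_zero.1 h with h | h
  · exact .inl ⟨sub_eq_zero.1 h, by linear_combination hadd - h⟩
  · exact .inr ⟨sub_eq_zero.1 h, by linear_combination hadd - h⟩

theorem ciSup_div_eq_of_le_mul {ι : Type*} {f g : ι → ℝ} {c : ℝ} (hc : 0 ≤ c)
    (hg : ∀ i, 0 ≤ g i) (hle : ∀ i, f i ≤ c * g i) (i₀ : ι) (heq : f i₀ = c * g i₀)
    (hg₀ : g i₀ ≠ 0) : ⨆ i, f i / g i = c := by
  have : Nonempty ι := ⟨i₀⟩
  refine ciSup_eq_of_forall_le_of_forall_lt_exists_gt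
    (fun i => div_le_of_le_mul₀ (hg i) hc (hle i)) fun d hd => ⟨i₀, ?_⟩
  rwa [heq, mul_div_cancel_right₀ _ hg₀]

theorem ciSup_fin_two {α : Type*} [ConditionallyCompleteLinearOrder α] (f : Fin 2 → α) :
    ⨆ i, f i = max (f 0) (f 1) :=
  le_antisymm (ciSup_le fun i => by fin_cases i <;> simp)
    (max_le (le_ciSup (Set.finite_range f).bddAbove 0) (le_ciSup (Set.finite_range f).bddAbove 1))

theorem add_div_two_le_rpow_mean {a b t : ℝ} (ha : 0 ≤ a) (hb : 0 ≤ b) (ht : 1 ≤ t) :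
    (a + b) / 2 ≤ ((a ^ t + b ^ t) / 2) ^ (1 / t) := by
  have h := Real.arith_mean_le_rpow_mean Finset.univ ![1 / 2, 1 / 2] ![a, b]
    (by simp) (by norm_num) (by simp [Fin.forall_fin_two, ha, hb]) ht
  convert h using 1 <;> simp [Fin.sum_univ_two] <;> ring_nf

namespace Matrix.IsHermitian

variable {A : Matrix (Fin 2) (Fin 2) ℂ} (hA : A.IsHermitian)

theorem eigenvalues_add_fin_two :
    hA.eigenvalues 0 + hA.eigenvalues 1 = (A 0 0).re + (A 1 1).re := by
  have h := congrArg Complex.re hA.trace_eq_sum_eigenvalues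
  simpa [Fin.sum_univ_two, Matrix.trace_fin_two] using h.symm

theorem eigenvalues_mul_fin_two :
    hA.eigenvalues 0 * hA.eigenvalues 1 = (A 0 0).re * (A 1 1).re - ‖A 0 1‖ ^ 2 := by
  have h := congrArg Complex.re hA.det_eq_prod_eigenvalues
  rw [Matrix.det_fin_two, ← hA.apply 1 0, ← hA.coe_re_apply_self 0,
    ← hA.coe_re_apply_self 1] at h
  simpa [Fin.prod_univ_two, Complex.mul_conj', ← Complex.ofReal_pow] using h.symm

theorem exists_re_apply_one_one_le_eigenvalues :
    ∃ i, (A 1 1).re ≤ hA.eigenvalues i := by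
  have h : ((A 1 1).re - hA.eigenvalues 0) * ((A 1 1).re - hA.eigenvalues 1) = -‖A 0 1‖ ^ 2 := by
    linear_combination (-(A 1 1).re) * hA.eigenvalues_add_fin_two + hA.eigenvalues_mul_fin_two
  rcases mul_nonpos_iff.1 (h ▸ neg_nonpos.2 (sq_nonneg _)) with ⟨-, h1⟩ | ⟨h0, -⟩
  · exact ⟨1, by linarith⟩
  · exact ⟨0, by linarith⟩

theorem two_mul_norm_apply_zero_one_le :
    2 * ‖A 0 1‖ ≤ |hA.eigenvalues 0| + |hA.eigenvalues 1| := by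
  have hgap : (hA.eigenvalues 0 - hA.eigenvalues 1) ^ 2
      = ((A 0 0).re - (A 1 1).re) ^ 2 + (2 * ‖A 0 1‖) ^ 2 := by
    linear_combination (hA.eigenvalues 0 + hA.eigenvalues 1 + (A 0 0).re + (A 1 1).re)
      * hA.eigenvalues_add_fin_two - 4 * hA.eigenvalues_mul_fin_two
  calc 2 * ‖A 0 1‖ ≤ |hA.eigenvalues 0 - hA.eigenvalues 1| :=
        (le_abs_self _).trans (sq_le_sq.1 (by rw [hgap]; exact le_add_of_nonneg_left (sq_nonneg _)))
    _ ≤ |hA.eigenvalues 0| + |hA.eigenvalues 1| := abs_sub _ _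

end Matrix.IsHermitian

namespace SchattenNotes

section Schatten

variable {m n : Type*} [Fintype m] [Fintype n] [DecidableEq n]

theorem singVal_nonneg (X : Matrix m n ℂ) (i : n) : 0 ≤ singVal X i :=
  Real.sqrt_nonneg _

theorem singVal_le_schatten {q : ℝ≥0∞} (hq : q ≠ 0) (X : Matrix m n ℂ) (i : n) :
    singVal X i ≤ schatten q X := by
  unfold schatten
  split_ifs with hqt
  · exact le_ciSup (Set.finite_range _).bddAbove i
  · have ht : 0 < q.toReal := ENNReal.toReal_pos hq hqt
    calc singVal X i = (singVal X i ^ q.toReal) ^ (1 / q.toReal) := by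
          rw [← Real.rpow_mul (singVal_nonneg X i), mul_one_div_cancel ht.ne', Real.rpow_one]
      _ ≤ (∑ j, singVal X j ^ q.toReal) ^ (1 / q.toReal) := by
          gcongr
          · exact Real.rpow_nonneg (singVal_nonneg X i) _
          · exact Finset.single_le_sum (fun j _ => Real.rpow_nonneg (singVal_nonneg X j) _)
              (Finset.mem_univ i)

theorem schatten_nonneg (p : ℝ≥0∞) (X : Matrix m n ℂ) : 0 ≤ schatten p X := by
  unfold schatten
  split_ifs
  · exact Real.iSup_nonneg (singVal_nonneg X)
  · exact Real.rpow_nonneg (Finset.sum_nonneg fun i _ => Real.rpow_nonneg (singVal_nonneg X i) _) _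

end Schatten

-- `singVal` lists the singular values in the unspecified order of `IsHermitian.eigenvalues`.
def HasSingVals (X : Matrix (Fin 2) (Fin 2) ℂ) (s t : ℝ) : Prop :=
  (singVal X 0 = s ∧ singVal X 1 = t) ∨ (singVal X 0 = t ∧ singVal X 1 = s)

theorem hasSingVals_fin_two {X : Matrix (Fin 2) (Fin 2) ℂ} {s t : ℝ} (hs : 0 ≤ s) (ht : 0 ≤ t)
    (hsum : s ^ 2 + t ^ 2 = (Xᴴ * X).trace.re) (hmul : s * t = ‖X.det‖) :
    HasSingVals X s t := by
  set hA := (posSemidef_conjTranspose_mul_self X).1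
  have hadd : hA.eigenvalues 0 + hA.eigenvalues 1 = s ^ 2 + t ^ 2 := by
    have h := congrArg Complex.re hA.trace_eq_sum_eigenvalues
    simpa [Fin.sum_univ_two, hsum] using h.symm
  have hprod : hA.eigenvalues 0 * hA.eigenvalues 1 = s ^ 2 * t ^ 2 := by
    have h := congrArg Complex.re hA.det_eq_prod_eigenvalues
    rw [det_mul, det_conjTranspose, mul_comm, Complex.star_def, Complex.mul_conj', ← hmul] at h
    simpa [Fin.prod_univ_two, ← Complex.ofReal_pow, mul_pow] using h.symm
  unfold HasSingVals singVal
  rcases eq_and_eq_or_eq_and_eq_of_add_eq_of_mul_eq hadd hprod with ⟨h0, h1⟩ | ⟨h0, h1⟩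
  · exact .inl ⟨h0 ▸ Real.sqrt_sq hs, h1 ▸ Real.sqrt_sq ht⟩
  · exact .inr ⟨h0 ▸ Real.sqrt_sq ht, h1 ▸ Real.sqrt_sq hs⟩

theorem schatten_of_hasSingVals {p : ℝ≥0∞} {X : Matrix (Fin 2) (Fin 2) ℂ} {s t : ℝ}
    (h : HasSingVals X s t) :
    schatten p X = if p = ∞ then max s t else (s ^ p.toReal + t ^ p.toReal) ^ (1 / p.toReal) := by
  unfold schatten
  rw [ciSup_fin_two, Fin.sum_univ_two]
  rcases h with ⟨h0, h1⟩ | ⟨h0, h1⟩ <;> rw [h0, h1]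
  rw [max_comm, add_comm]

theorem schatten_of_hasSingVals_zero {p : ℝ≥0∞} (hp : p ≠ 0) {X : Matrix (Fin 2) (Fin 2) ℂ}
    {s : ℝ} (hs : 0 ≤ s) (h : HasSingVals X s 0) : schatten p X = s := by
  rw [schatten_of_hasSingVals h]
  split_ifs with hpt
  · exact max_eq_left hs
  · have ht : p.toReal ≠ 0 := (ENNReal.toReal_pos hp hpt).ne'
    rw [Real.zero_rpow ht, add_zero, ← Real.rpow_mul hs, mul_one_div_cancel ht, Real.rpow_one]

theorem hasSingVals_entry_zero_zero (c : ℂ) : HasSingVals !![c, 0; 0, 0] ‖c‖ 0 :=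
  hasSingVals_fin_two (norm_nonneg c) le_rfl
    (by simp [trace_fin_two, mul_apply, Fin.sum_univ_two, Complex.conj_mul', ← Complex.ofReal_pow])
    (by simp [det_fin_two])

theorem hasSingVals_entry_zero_one : HasSingVals !![0, 1; 0, 0] 1 0 :=
  hasSingVals_fin_two zero_le_one le_rfl
    (by simp [trace_fin_two, mul_apply, Fin.sum_univ_two])
    (by simp [det_fin_two])

theorem hasSingVals_pauliX : HasSingVals !![0, 1; 1, 0] 1 1 :=
  hasSingVals_fin_two zero_le_one zero_le_one
    (by norm_num [trace_fin_two, mul_apply, Fin.sum_univ_two])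
    (by simp [det_fin_two])

theorem schatten_entry_zero_one {q : ℝ≥0∞} (hq : q ≠ 0) : schatten q !![(0 : ℂ), 1; 0, 0] = 1 :=
  schatten_of_hasSingVals_zero hq zero_le_one hasSingVals_entry_zero_one

theorem isHermitian_pauliX : (!![0, 1; 1, 0] : Matrix (Fin 2) (Fin 2) ℂ).IsHermitian := by
  ext i j
  fin_cases i <;> fin_cases j <;> simp

theorem schatten_pauliX {q : ℝ≥0∞} (hq : q ≠ ∞) :
    schatten q !![(0 : ℂ), 1; 1, 0] = 2 ^ (1 / q.toReal) := by
  rw [schatten_of_hasSingVals hasSingVals_pauliX, if_neg hq, Real.one_rpow]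
  norm_num

theorem hasSingVals_of_isHermitian {X : Matrix (Fin 2) (Fin 2) ℂ} (hX : X.IsHermitian) :
    HasSingVals X |hX.eigenvalues 0| |hX.eigenvalues 1| := by
  refine hasSingVals_fin_two (abs_nonneg _) (abs_nonneg _) ?_ ?_
  · have htr : (Xᴴ * X).trace.re = (X 0 0).re ^ 2 + (X 1 1).re ^ 2 + 2 * ‖X 0 1‖ ^ 2 := by
      rw [hX.eq, trace_fin_two, mul_apply, mul_apply, Fin.sum_univ_two, Fin.sum_univ_two,
        ← hX.apply 1 0, ← hX.coe_re_apply_self 0, ← hX.coe_re_apply_self 1]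
      simp [Complex.mul_conj', Complex.conj_mul', sq]
      ring
    rw [htr, sq_abs, sq_abs]
    linear_combination (hX.eigenvalues 0 + hX.eigenvalues 1 + (X 0 0).re + (X 1 1).re)
      * hX.eigenvalues_add_fin_two - 2 * hX.eigenvalues_mul_fin_two
  · rw [hX.det_eq_prod_eigenvalues, Fin.prod_univ_two, norm_mul]
    simp

theorem norm_apply_zero_one_le_schatten {q : ℝ≥0∞} (hq : q ≠ 0) (X : Matrix (Fin 2) (Fin 2) ℂ) :
    ‖X 0 1‖ ≤ schatten q X := by
  obtain ⟨i, hi⟩ := (posSemidef_conjTranspose_mul_self X).1.exists_re_apply_one_one_le_eigenvalues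
  have hdiag : ‖X 0 1‖ ^ 2 ≤ ((Xᴴ * X) 1 1).re := by
    simpa [mul_apply, Fin.sum_univ_two, Complex.conj_mul', sq] using mul_self_nonneg ‖X 1 1‖
  exact (Real.le_sqrt_of_sq_le (hdiag.trans hi)).trans (singVal_le_schatten hq X i)

theorem norm_apply_zero_one_le_of_isHermitian {q : ℝ≥0∞} (hq : 1 ≤ q) (hq' : q ≠ ∞)
    {X : Matrix (Fin 2) (Fin 2) ℂ} (hX : X.IsHermitian) :
    ‖X 0 1‖ ≤ 2 ^ (-(1 / q.toReal)) * schatten q X := by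
  have ht : 1 ≤ q.toReal := ENNReal.toReal_one ▸ ENNReal.toReal_mono hq' hq
  rw [schatten_of_hasSingVals (hasSingVals_of_isHermitian hX), if_neg hq']
  calc ‖X 0 1‖ ≤ (|hX.eigenvalues 0| + |hX.eigenvalues 1|) / 2 := by
        linarith [hX.two_mul_norm_apply_zero_one_le]
    _ ≤ ((|hX.eigenvalues 0| ^ q.toReal + |hX.eigenvalues 1| ^ q.toReal) / 2) ^ (1 / q.toReal) :=
        add_div_two_le_rpow_mean (abs_nonneg _) (abs_nonneg _) ht
    _ = _ := by
        rw [div_eq_mul_inv, Real.mul_rpow (by positivity) (by norm_num), Real.inv_rpow zero_le_two,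
          Real.rpow_neg zero_le_two, mul_comm]

theorem outer_ket0_mul_mul_outer_ket1_ket0 (X : Matrix (Fin 2) (Fin 2) ℂ) :
    outer ket0 ket0 * X * outer ket1 ket0 = !![X 0 1, 0; 0, 0] := by
  ext i j
  fin_cases i <;> fin_cases j <;>
    simp [outer, mul_apply, vecMulVec_apply, ket0, ket1, Fin.sum_univ_two, -cons_vecMulVec]

/-- For `Φ(X) = |0⟩⟨0| X |1⟩⟨0|`, one has `‖Φ‖_{q→p} = 1` while
`‖Φ‖^H_{q→p} = 2^{−1/q} < 1` for `q < ∞`. -/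
theorem stmt12 (Φ : Matrix (Fin 2) (Fin 2) ℂ →ₗ[ℂ] Matrix (Fin 2) (Fin 2) ℂ)
    (hΦ : ∀ X, Φ X = outer ket0 ket0 * X * outer ket1 ket0)
    (p q : ℝ≥0∞) (hp : 1 ≤ p) (hq : 1 ≤ q) :
    opNorm q p Φ = 1 ∧
    (q ≠ ∞ → opNormH q p Φ = (2 : ℝ) ^ (-(1 / q.toReal)) ∧ opNormH q p Φ < 1) := by
  have hq₀ : q ≠ 0 := (zero_lt_one.trans_le hq).ne'
  have hΦX : ∀ X, schatten p (Φ X) = ‖X 0 1‖ := fun X => by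
    rw [hΦ, outer_ket0_mul_mul_outer_ket1_ket0,
      schatten_of_hasSingVals_zero (zero_lt_one.trans_le hp).ne' (norm_nonneg _)
        (hasSingVals_entry_zero_zero _)]
  refine ⟨?_, fun hq' => ?_⟩
  · refine ciSup_div_eq_of_le_mul zero_le_one (fun X => schatten_nonneg q X.1)
      (fun X => ?_) ⟨!![0, 1; 0, 0], fun h => by simpa using congrFun₂ h 0 1⟩
      (by simp [hΦX, schatten_entry_zero_one hq₀]) (by simp [schatten_entry_zero_one hq₀])
    rw [hΦX, one_mul]
    exact norm_apply_zero_one_le_schatten hq₀ X.1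
  have hH : opNormH q p Φ = (2 : ℝ) ^ (-(1 / q.toReal)) := by
    refine ciSup_div_eq_of_le_mul (by positivity) (fun X => schatten_nonneg q X.1)
      (fun X => ?_) ⟨!![0, 1; 1, 0], isHermitian_pauliX, fun h => by simpa using congrFun₂ h 0 1⟩
      (by simp [hΦX, schatten_pauliX hq', ← Real.rpow_add])
      (schatten_pauliX hq' ▸ (Real.rpow_pos_of_pos two_pos _).ne')
    rw [hΦX]
    exact norm_apply_zero_one_le_of_isHermitian hq hq' X.2.1
  refine ⟨hH, hH ▸ Real.rpow_lt_one_of_one_lt_of_neg one_lt_two (neg_neg_of_pos ?_)⟩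
  exact one_div_pos.2 (ENNReal.toReal_pos hq₀ hq')

end SchattenNotes
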